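/- Let A be a commutative ring and let K be a bounded cochain complex of A-modules such that for every integer i the cohomology module H^i(K) is a projective A-module. Then there exists a quasi-isomorphism of cochain complexes φ : H → K, where H is the cochain complex whose term in degree i is H^i(K) and whose differentials are all zero. -/

import Mathlib

/-! A complex `L` with zero differentials is its own cohomology. Lifting each `H^i(K)` along the
epimorphism `Z^i(K) ⟶ H^i(K)`, which is possible by projectivity, and composing with
`Z^i(K) ⟶ K^i` gives a chain map `H ⟶ K` which induces the identity on cohomology. -/

open CategoryTheory CategoryTheory.Limits

universe u

/-- The cochain complex whose term in degree `i` is the `i`-th cohomology module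
`H^i(K)` of `K`, with all differentials equal to zero. -/
noncomputable def gradedHomologyComplex {A : Type u} [CommRing A]
    (K : CochainComplex (ModuleCat.{u} A) ℤ) : CochainComplex (ModuleCat.{u} A) ℤ where
  X i := K.homology i
  d _ _ := 0
  shape _ _ _ := rfl
  d_comp_d' := by intros; simp

namespace HomologicalComplex

variable {C ι : Type*} [Category C] [HasZeroMorphisms C] {c : ComplexShape ι}
  (L K : HomologicalComplex C c) [∀ i, K.HasHomology i] (hL : ∀ i j, L.d i j = 0)
  (s : ∀ i, L.X i ⟶ K.cycles i)

@[simps]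
noncomputable def homOfCycles : L ⟶ K where
  f i := s i ≫ K.iCycles i
  comm' i j _ := by simp [hL]

lemma cyclesMap_homOfCycles [∀ i, L.HasHomology i] (i : ι) :
    cyclesMap (homOfCycles L K hL s) i = L.iCycles i ≫ s i := by
  rw [← cancel_mono (K.iCycles i), cyclesMap_i, homOfCycles_f, Category.assoc]

lemma homologyπ_comp_homologyMap_homOfCycles [∀ i, L.HasHomology i] (i : ι) :
    L.homologyπ i ≫ homologyMap (homOfCycles L K hL s) i =
      L.iCycles i ≫ s i ≫ K.homologyπ i := by
  rw [homologyπ_naturality, cyclesMap_homOfCycles, Category.assoc]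

lemma quasiIsoAt_homOfCycles [∀ i, L.HasHomology i] (i : ι)
    (hs : IsIso (s i ≫ K.homologyπ i)) : QuasiIsoAt (homOfCycles L K hL s) i := by
  have := L.isIso_homologyπ _ i rfl (hL _ _)
  have := L.isIso_iCycles i _ rfl (hL _ _)
  have hφ : homologyMap (homOfCycles L K hL s) i =
      inv (L.homologyπ i) ≫ L.iCycles i ≫ s i ≫ K.homologyπ i := by
    rw [← homologyπ_comp_homologyMap_homOfCycles, IsIso.inv_hom_id_assoc]
  rw [quasiIsoAt_iff_isIso_homologyMap, hφ]
  infer_instance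

lemma quasiIso_homOfCycles [∀ i, L.HasHomology i] (hs : ∀ i, IsIso (s i ≫ K.homologyπ i)) :
    QuasiIso (homOfCycles L K hL s) :=
  ⟨fun i => quasiIsoAt_homOfCycles L K hL s i (hs i)⟩

end HomologicalComplex

theorem split_lem_2_1_modules_general {A : Type u} [CommRing A]
    (K : CochainComplex (ModuleCat.{u} A) ℤ)
    (hproj : ∀ i : ℤ, Projective (K.homology i)) :
    ∃ φ : gradedHomologyComplex K ⟶ K, QuasiIso φ := by
  let s (i : ℤ) : K.homology i ⟶ K.cycles i :=
    have := hproj i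
    Projective.factorThru (𝟙 _) (K.homologyπ i)
  have hs (i : ℤ) : IsIso (s i ≫ K.homologyπ i) := by
    have := hproj i
    rw [Projective.factorThru_comp]
    infer_instance
  exact ⟨_, HomologicalComplex.quasiIso_homOfCycles (gradedHomologyComplex K) K
    (fun _ _ => rfl) s hs⟩

/-- Let `A` be a commutative ring and `K` a bounded cochain complex of
`A`-modules such that every cohomology module `H^i(K)` is projective. Then there is a
quasi-isomorphism `φ : H ⟶ K`, where `H` is the complex with terms `H^i(K)` and zero
differentials. -/
theorem split_lem_2_1_modules {A : Type u} [CommRing A]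
    (K : CochainComplex (ModuleCat.{u} A) ℤ)
    (hbdd : ∃ a b : ℤ, ∀ i : ℤ, (i < a ∨ b < i) → IsZero (K.X i))
    (hproj : ∀ i : ℤ, Projective (K.homology i)) :
    ∃ φ : gradedHomologyComplex K ⟶ K, QuasiIso φ :=
  split_lem_2_1_modules_general K hproj
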